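/- Let A be an endomorphism of a Lorentzian vector space such that g(Au,v) + g(u,Av) = α g(u,v) + β S(u,v) for all u,v, where S(u,v) = g(k,u)g(k,v) for a fixed future-directed null vector k with Ak = γk, and β ≥ 0 everywhere (all constants). Then the one-parameter group φ_s = exp(sA) consists of causal maps for all s ≥ 0. -/

import Mathlib

open LinearMap (BilinForm)

variable {V : Type*} [NormedAddCommGroup V] [NormedSpace ℝ V] [FiniteDimensional ℝ V]

/-- `v` is a future-directed causal vector w.r.t. metric `g` and time orientation `u₀`. -/
def FD (g : BilinForm ℝ V) (u₀ v : V) : Prop :=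
  0 ≤ g v v ∧ v ≠ 0 ∧ 0 < g u₀ v

/-- `g` is Lorentzian with time orientation `u₀`. -/
def IsLorentzian (g : BilinForm ℝ V) (u₀ : V) : Prop :=
  g.IsSymm ∧ 0 < g u₀ u₀ ∧ ∀ v, v ≠ 0 → g u₀ v = 0 → g v v < 0

/-- a Kerr–Schild-type generator `A`, with
`g(Au,v)+g(u,Av) = α g(u,v) + β g(k,u)g(k,v)`, `β ≥ 0`, `Ak = γ k` for a fixed
future-directed null `k`, exponentiates to a one-parameter family of causal maps
for `s ≥ 0`. -/
theorem kerr_schild_generator_exponentiates_to_causal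
    (g : BilinForm ℝ V) (u₀ : V) (hL : IsLorentzian g u₀)
    (k : V) (hknull : g k k = 0) (hkfut : 0 < g u₀ k)
    (α β γ : ℝ) (hβ : 0 ≤ β)
    (A : V →L[ℝ] V) (hAk : A k = γ • k)
    (hdef : ∀ u v : V, g (A u) v + g u (A v) = α * g u v + β * (g k u * g k v)) :
    ∀ s : ℝ, 0 ≤ s → ∀ v : V, FD g u₀ v →
      FD g u₀ (NormedSpace.exp (s • A) v) := by
  obtain ⟨hsymm, hu₀, hneg⟩ := hL
  intro s hs v hv
  obtain ⟨hv1, hv2, hv3⟩ := hv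
  -- the flow
  set φ : ℝ → V := fun t => NormedSpace.exp (t • A) v with hφdef
  -- derivative of the flow
  have hderiv : ∀ t : ℝ, HasDerivAt φ (A (φ t)) t := by
    intro t
    have h1 : HasDerivAt (fun u : ℝ => NormedSpace.exp (u • A))
        (A * NormedSpace.exp (t • A)) t := hasDerivAt_exp_smul_const' A t
    have h2 := h1.clm_apply (hasDerivAt_const t v)
    simpa [ContinuousLinearMap.mul_apply] using h2
  -- `g` as a continuous bilinear map
  let g₁ : V →ₗ[ℝ] (V →L[ℝ] ℝ) :=
    (LinearMap.toContinuousLinearMap : (V →ₗ[ℝ] ℝ) ≃ₗ[ℝ] (V →L[ℝ] ℝ)).toLinearMap ∘ₗ g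
  let B : V →L[ℝ] V →L[ℝ] ℝ := LinearMap.toContinuousLinearMap g₁
  have hB : ∀ u w : V, B u w = g u w := fun u w => rfl
  -- derivative of f(t) = g(φ t, φ t)
  have hf' : ∀ t : ℝ, HasDerivAt (fun t => g (φ t) (φ t))
      (α * g (φ t) (φ t) + β * (g k (φ t) * g k (φ t))) t := by
    intro t
    have hc : HasDerivAt (fun t => B (φ t)) (B (A (φ t))) t :=
      B.hasFDerivAt.comp_hasDerivAt t (hderiv t)
    have h3 := hc.clm_apply (hderiv t)
    have h4 : B (A (φ t)) (φ t) + B (φ t) (A (φ t))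
        = α * g (φ t) (φ t) + β * (g k (φ t) * g k (φ t)) := by
      rw [hB, hB]; exact hdef (φ t) (φ t)
    rw [h4] at h3
    exact h3
  -- F(t) = exp(-α t) * f(t) has nonnegative derivative
  have hF : ∀ t : ℝ, HasDerivAt (fun t => Real.exp (-α * t) * g (φ t) (φ t))
      (Real.exp (-α * t) * (β * (g k (φ t) * g k (φ t)))) t := by
    intro t
    have he : HasDerivAt (fun t : ℝ => Real.exp (-α * t)) (Real.exp (-α * t) * (-α)) t := by
      simpa using ((hasDerivAt_id t).const_mul (-α)).exp
    have := he.fun_mul (hf' t)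
    exact this.congr_deriv (by ring)
  have hFmono : Monotone (fun t => Real.exp (-α * t) * g (φ t) (φ t)) := by
    apply monotone_of_deriv_nonneg
    · exact fun t => (hF t).differentiableAt
    · intro t
      rw [(hF t).deriv]
      have h2 : 0 ≤ g k (φ t) * g k (φ t) := mul_self_nonneg _
      positivity
  have hφ0 : φ 0 = v := by
    simp [hφdef, NormedSpace.exp_zero]
  -- f(t) ≥ 0 for t ≥ 0
  have hfnn : ∀ t : ℝ, 0 ≤ t → 0 ≤ g (φ t) (φ t) := by
    intro t ht
    have h1 := hFmono ht
    simp only [hφ0, mul_zero, neg_zero, Real.exp_zero, one_mul] at h1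
    have h2 : 0 ≤ Real.exp (-α * t) * g (φ t) (φ t) := le_trans hv1 h1
    nlinarith [Real.exp_pos (-α * t)]
  -- the flow is injective, so φ t ≠ 0
  have hφne : ∀ t : ℝ, φ t ≠ 0 := by
    intro t h
    apply hv2
    have hcomm : Commute (-(t • A)) (t • A) := (Commute.refl (t • A)).neg_left
    have hmul : NormedSpace.exp (-(t • A)) * NormedSpace.exp (t • A) = 1 := by
      rw [← NormedSpace.exp_add_of_commute_of_mem_ball (𝕂 := ℝ) hcomm
        ((NormedSpace.expSeries_radius_eq_top ℝ (V →L[ℝ] V)).symm ▸ edist_lt_top _ _)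
        ((NormedSpace.expSeries_radius_eq_top ℝ (V →L[ℝ] V)).symm ▸ edist_lt_top _ _), neg_add_cancel,
        NormedSpace.exp_zero]
    calc v = (NormedSpace.exp (-(t • A)) * NormedSpace.exp (t • A)) v := by
            rw [hmul]; simp
      _ = NormedSpace.exp (-(t • A)) (φ t) := rfl
      _ = 0 := by rw [h, map_zero]
  -- p(t) = g(u₀, φ t) never vanishes for t ≥ 0
  have hφcont : Continuous φ := by
    rw [continuous_iff_continuousAt]
    exact fun t => (hderiv t).continuousAt
  have hgu₀cont : Continuous fun w : V => g u₀ w := (g u₀).continuous_of_finiteDimensional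
  have hpcont : Continuous fun t => g u₀ (φ t) := hgu₀cont.comp hφcont
  have hpne : ∀ t : ℝ, 0 ≤ t → g u₀ (φ t) ≠ 0 := by
    intro t ht h
    exact absurd (hneg _ (hφne t) h) (not_lt.2 (hfnn t ht))
  refine ⟨hfnn s hs, hφne s, ?_⟩
  by_contra hle
  push_neg at hle
  have h0 : (0 : ℝ) ∈ Set.Icc (g u₀ (φ s)) (g u₀ (φ 0)) := by
    constructor
    · exact hle
    · rw [hφ0]; exact le_of_lt hv3
  obtain ⟨t, ht, hpt⟩ := intermediate_value_Icc' hs (hpcont.continuousOn) h0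
  exact hpne t ht.1 hpt
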